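/- Let J : C → D be a fully faithful functor with C a univalent category. Then for any morphism p : Ũ → U in D, the type of J-universe structures on p is a proposition, and hence the forgetful map from J-relative universes to weak J-relative universes is an equivalence of types. -/
import Mathlib


open CategoryTheory Limits Opposite

universe v v' v₂ u u' u₂ u₃ u₄

/-- An object extension structure on a category `C`. -/
structure ObjExtStructure (C : Type u) [Category.{v} C] where
  Ty : Cᵒᵖ ⥤ Type v
  ext : ∀ (Γ : C), Ty.obj (op Γ) → C
  π : ∀ (Γ : C) (A : Ty.obj (op Γ)), ext Γ A ⟶ Γ

/-- A representation of the fiber of a map of presheaves `p : Tm ⟶ Ty` over `A : Ty(Γ)`. -/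
structure FiberRepresentation {C : Type u} [Category.{v} C] {Ty Tm : Cᵒᵖ ⥤ Type v}
    (p : Tm ⟶ Ty) (Γ : C) (A : Ty.obj (op Γ)) where
  ext : C
  π : ext ⟶ Γ
  te : Tm.obj (op ext)
  te_p : p.app (op ext) te = Ty.map π.op A
  isPB : IsPullback (yonedaEquiv.symm te) (yoneda.map π) p (yonedaEquiv.symm A)

/-- A CwF structure (à la Fiore) on a category `C`. -/
structure CwFStructure (C : Type u) [Category.{v} C] where
  Ty : Cᵒᵖ ⥤ Type v
  Tm : Cᵒᵖ ⥤ Type v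
  p : Tm ⟶ Ty
  rep : ∀ (Γ : C) (A : Ty.obj (op Γ)), FiberRepresentation p Γ A

/-- A (functional) term-structure over an object extension structure `X`. -/
structure TermStructure {C : Type u} [Category.{v} C] (X : ObjExtStructure C) where
  Tm : Cᵒᵖ ⥤ Type v
  p : Tm ⟶ X.Ty
  te : ∀ (Γ : C) (A : X.Ty.obj (op Γ)), Tm.obj (op (X.ext Γ A))
  te_p : ∀ Γ A, p.app _ (te Γ A) = X.Ty.map (X.π Γ A).op A
  isPB : ∀ Γ A, IsPullback (yonedaEquiv.symm (te Γ A)) (yoneda.map (X.π Γ A)) p (yonedaEquiv.symm A)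

/-- A (split) q-morphism structure over an object extension structure `X`. -/
structure qMorphismStructure {C : Type u} [Category.{v} C] (X : ObjExtStructure C) where
  q : ∀ {Γ' Γ : C} (f : Γ' ⟶ Γ) (A : X.Ty.obj (op Γ)),
      X.ext Γ' (X.Ty.map f.op A) ⟶ X.ext Γ A
  isPB : ∀ {Γ' Γ : C} (f : Γ' ⟶ Γ) (A : X.Ty.obj (op Γ)),
      IsPullback (q f A) (X.π Γ' (X.Ty.map f.op A)) (X.π Γ A) f
  q_id : ∀ (Γ : C) (A : X.Ty.obj (op Γ)), q (𝟙 Γ) A = eqToHom (by simp)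
  q_comp : ∀ {Γ'' Γ' Γ : C} (f' : Γ'' ⟶ Γ') (f : Γ' ⟶ Γ) (A : X.Ty.obj (op Γ)),
      q (f' ≫ f) A = eqToHom (by simp) ≫ q f' (X.Ty.map f.op A) ≫ q f A

/-- Compatibility between a term-structure and a q-morphism structure. -/
def Compatible {C : Type u} [Category.{v} C] {X : ObjExtStructure C}
    (Y : TermStructure X) (Z : qMorphismStructure X) : Prop :=
  ∀ {Γ' Γ : C} (f : Γ' ⟶ Γ) (A : X.Ty.obj (op Γ)),
    Y.te Γ' (X.Ty.map f.op A) = Y.Tm.map (Z.q f A).op (Y.te Γ A)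

/-- A split type-category structure on `C` (Pitts' type-categories, split version). -/
structure SplitTypeCatStructure (C : Type u) [Category.{v} C] where
  Ty : C → Type v
  isSet : ∀ (Γ : C) (A B : Ty Γ) (p q : A = B), p = q
  ext : ∀ Γ, Ty Γ → C
  π : ∀ Γ A, ext Γ A ⟶ Γ
  reind : ∀ {Γ' Γ : C} (_ : Γ' ⟶ Γ), Ty Γ → Ty Γ'
  q : ∀ {Γ' Γ : C} (f : Γ' ⟶ Γ) (A : Ty Γ), ext Γ' (reind f A) ⟶ ext Γ A
  isPB : ∀ {Γ' Γ : C} (f : Γ' ⟶ Γ) (A : Ty Γ),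
      IsPullback (q f A) (π Γ' (reind f A)) (π Γ A) f
  reind_id : ∀ (Γ : C) (A : Ty Γ), reind (𝟙 Γ) A = A
  q_id : ∀ (Γ : C) (A : Ty Γ), q (𝟙 Γ) A = eqToHom (by rw [reind_id])
  reind_comp : ∀ {Γ'' Γ' Γ : C} (f' : Γ'' ⟶ Γ') (f : Γ' ⟶ Γ) (A : Ty Γ),
      reind (f' ≫ f) A = reind f' (reind f A)
  q_comp : ∀ {Γ'' Γ' Γ : C} (f' : Γ'' ⟶ Γ') (f : Γ' ⟶ Γ) (A : Ty Γ),
      q (f' ≫ f) A = eqToHom (by rw [reind_comp]) ≫ q f' (reind f A) ≫ q f A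

/-- A `J`-pullback of `p : Ũ ⟶ U` along `f : J(X) ⟶ U`. -/
structure RelPullback {C : Type u} {D : Type u'} [Category.{v} C] [Category.{v'} D]
    (J : C ⥤ D) {Ut U : D} (p : Ut ⟶ U) (X : C) (f : J.obj X ⟶ U) where
  obj : C
  pr : obj ⟶ X
  Q : J.obj obj ⟶ Ut
  isPB : IsPullback Q (J.map pr) p f

/-- A universe relative to a functor `J`. -/
structure RelUniverse {C : Type u} {D : Type u'} [Category.{v} C] [Category.{v'} D]
    (J : C ⥤ D) where
  Ut : D
  U : D
  p : Ut ⟶ U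
  str : ∀ (X : C) (f : J.obj X ⟶ U), RelPullback J p X f

/-- A weak universe relative to a functor `J`. -/
structure WeakRelUniverse {C : Type u} {D : Type u'} [Category.{v} C] [Category.{v'} D]
    (J : C ⥤ D) where
  Ut : D
  U : D
  p : Ut ⟶ U
  str : ∀ (X : C) (f : J.obj X ⟶ U), Nonempty (RelPullback J p X f)

/-- A category is univalent if `idtoiso` is an equivalence. -/
def IsUnivalentCat (C : Type u) [Category.{v} C] : Prop :=
  ∀ X Y : C, Function.Bijective (fun h : X = Y => eqToIso h)

/-- A representable map of presheaves on `C`. -/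
structure RepMapPresheaves (C : Type u) [Category.{v} C] where
  Ty : Cᵒᵖ ⥤ Type v
  Tm : Cᵒᵖ ⥤ Type v
  p : Tm ⟶ Ty
  rep : ∀ (Γ : C) (A : Ty.obj (op Γ)), Nonempty (FiberRepresentation p Γ A)

/-- The univalence axiom for a universe. -/
def UnivalenceAxiom : Prop :=
  ∀ α β : Type v, Function.Bijective (fun h : α = β => Equiv.cast h)

lemma relPB_sub {C : Type u} {D : Type u'} [Category.{v} C] [Category.{v'} D]
    (J : C ⥤ D) [J.Full] [J.Faithful] (hC : IsUnivalentCat C)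
    {Ut U : D} (p : Ut ⟶ U) (X : C) (f : J.obj X ⟶ U) :
    Subsingleton (RelPullback J p X f) := by
  constructor
  rintro ⟨A, prA, QA, hA⟩ ⟨B, prB, QB, hB⟩
  obtain ⟨h, hh⟩ := (hC A B).2 (J.preimageIso (hA.isoIsPullback _ _ hB))
  subst h
  have heC : J.preimageIso (hA.isoIsPullback _ _ hB) = Iso.refl A := by rw [← hh]; rfl
  have he : (hA.isoIsPullback _ _ hB).hom = 𝟙 (J.obj A) := by
    have := congrArg Iso.hom heC
    simp only [Functor.preimageIso_hom, Iso.refl_hom] at this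
    rw [← J.map_preimage (hA.isoIsPullback _ _ hB).hom, this, J.map_id]
  have h1 : prA = prB := by
    apply J.map_injective
    have := hA.isoIsPullback_hom_snd _ _ hB
    rw [he, Category.id_comp] at this; exact this.symm
  have h2 : QA = QB := by
    have := hA.isoIsPullback_hom_fst _ _ hB
    rw [he, Category.id_comp] at this; exact this.symm
  simp [h1, h2]

theorem stmt7 {C : Type u} {D : Type u'} [Category.{v} C] [Category.{v'} D]
    (J : C ⥤ D) [J.Full] [J.Faithful] (hC : IsUnivalentCat C) :
    (∀ {Ut U : D} (p : Ut ⟶ U),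
      Subsingleton (∀ (X : C) (f : J.obj X ⟶ U), RelPullback J p X f)) ∧
    Function.Bijective (fun u : RelUniverse J =>
      ({ Ut := u.Ut, U := u.U, p := u.p,
         str := fun X f => ⟨u.str X f⟩ } : WeakRelUniverse J)) := by
  have sub : ∀ {Ut U : D} (p : Ut ⟶ U),
      Subsingleton (∀ (X : C) (f : J.obj X ⟶ U), RelPullback J p X f) := by
    intro Ut U p
    constructor
    intro a b
    funext X f
    exact (relPB_sub J hC p X f).allEq _ _
  refine ⟨sub, ?_, ?_⟩
  · rintro ⟨Ut, U, p, str⟩ ⟨Ut', U', p', str'⟩ heq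
    simp only [WeakRelUniverse.mk.injEq] at heq
    obtain ⟨rfl, rfl, h3, -⟩ := heq
    congr 1
    exact (sub p).allEq _ _
  · rintro ⟨Ut, U, p, str⟩
    refine ⟨⟨Ut, U, p, fun X f => (str X f).some⟩, ?_⟩
    congr 1
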